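/- arXiv:2207.10019 — 4 statements merged into one kernel-verified Lean document; each statement's English description precedes it below -/
import Mathlib

section
/- For two unit spacelike vectors u, v in R^{2,1}, one has ⟨u,v⟩ ≥ 1 if and only if I_u ⊆ I_v or I_v ⊆ I_u, where I_w = {θ ∈ S^1 : ⟨w, (cos θ, sin θ, 1)⟩ ≥ 0}. -/
noncomputable section
open Real Set

/-- The Minkowski bilinear form on `ℝ^{2,1}`. -/
def mink (u v : ℝ × ℝ × ℝ) : ℝ := u.1 * v.1 + u.2.1 * v.2.1 - u.2.2 * v.2.2

/-- The null vector `(cos θ, sin θ, 1)` in the direction `θ`. -/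
def nullvec (θ : ℝ) : ℝ × ℝ × ℝ := (Real.cos θ, Real.sin θ, 1)

/-- The arc `I_w = {θ : ⟨w, θ⃗⟩ ≥ 0}` associated to a vector `w`. -/
def Iarc (w : ℝ × ℝ × ℝ) : Set ℝ := {θ : ℝ | 0 ≤ mink w (nullvec θ)}

/-!
The arc `I_w` only sees `w` through the half-cone `{n future null : ⟨w, n⟩ ≥ 0}`, since every
future null vector is a positive multiple of some `(cos θ, sin θ, 1)`.
If `t = ⟨u, v⟩` satisfies `t² ≥ 1`, then `w = v - t u` is causal, so `⟨w, n⟩ = ⟨v, n⟩ - t ⟨u, n⟩`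
has constant sign on future null vectors `n`; for `t ≥ 1` this gives one of the two inclusions.
Conversely, if `I_u ⊆ I_v`, testing at the two endpoints of `I_u` gives `t² ≥ 1`, and `t ≤ -1`
is ruled out by testing at the midpoint of `I_u` or at the midpoint of the complement of `I_v`.
-/

def IsFutureNull (n : ℝ × ℝ × ℝ) : Prop := mink n n = 0 ∧ 0 < n.2.2

lemma mink_comm (u v : ℝ × ℝ × ℝ) : mink u v = mink v u := by
  unfold mink; ring

lemma mink_neg_left (u v : ℝ × ℝ × ℝ) : mink (-u) v = -mink u v := by
  simp only [mink, Prod.fst_neg, Prod.snd_neg]; ring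

lemma mink_smul_right (w n : ℝ × ℝ × ℝ) (s : ℝ) : mink w (s • n) = s * mink w n := by
  simp only [mink, Prod.smul_fst, Prod.smul_snd, smul_eq_mul]; ring

lemma mink_sub_smul_left (u v n : ℝ × ℝ × ℝ) (t : ℝ) :
    mink (v - t • u) n = mink v n - t * mink u n := by
  simp only [mink, Prod.fst_sub, Prod.snd_sub, Prod.smul_fst, Prod.smul_snd, smul_eq_mul]; ring

lemma mink_sub_smul_self (u v : ℝ × ℝ × ℝ) (t : ℝ) :
    mink (v - t • u) (v - t • u) = mink v v - 2 * t * mink u v + t ^ 2 * mink u u := by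
  simp only [mink, Prod.fst_sub, Prod.snd_sub, Prod.smul_fst, Prod.smul_snd, smul_eq_mul]; ring

lemma isFutureNull_nullvec (θ : ℝ) : IsFutureNull (nullvec θ) := by
  refine ⟨?_, one_pos⟩
  simp only [mink, nullvec]
  linear_combination sin_sq_add_cos_sq θ

lemma exists_eq_smul_nullvec {n : ℝ × ℝ × ℝ} (hn : IsFutureNull n) :
    ∃ θ, n = n.2.2 • nullvec θ := by
  obtain ⟨x, y, z⟩ := n
  obtain ⟨hnull, hz⟩ := hn
  have hnorm : ‖(⟨x, y⟩ : ℂ)‖ = z := by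
    simp only [mink] at hnull
    rw [Complex.norm_eq_sqrt_sq_add_sq, show x ^ 2 + y ^ 2 = z ^ 2 by linear_combination hnull]
    exact sqrt_sq hz.le
  refine ⟨Complex.arg ⟨x, y⟩, ?_⟩
  simp only [nullvec, Prod.smul_mk, smul_eq_mul, mul_one, ← hnorm, Complex.norm_mul_cos_arg,
    Complex.norm_mul_sin_arg]

theorem Iarc_subset_Iarc_iff {u v : ℝ × ℝ × ℝ} :
    Iarc u ⊆ Iarc v ↔ ∀ n, IsFutureNull n → 0 ≤ mink u n → 0 ≤ mink v n := by
  refine ⟨fun h n hn hun => ?_, fun h θ hθ => h _ (isFutureNull_nullvec θ) hθ⟩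
  obtain ⟨θ, hθ⟩ := exists_eq_smul_nullvec hn
  have hscale : ∀ w, mink w n = n.2.2 * mink w (nullvec θ) := fun w => by
    conv_lhs => rw [hθ]
    exact mink_smul_right _ _ _
  rw [hscale] at hun ⊢
  exact mul_nonneg hn.2.le (h ((mul_nonneg_iff_of_pos_left hn.2).mp hun))

theorem mink_nonneg_of_causal {w n : ℝ × ℝ × ℝ} (hw : mink w w ≤ 0) (hw' : w.2.2 ≤ 0)
    (hn : mink n n ≤ 0) (hn' : 0 ≤ n.2.2) : 0 ≤ mink w n := by
  obtain ⟨a, b, c⟩ := w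
  obtain ⟨x, y, z⟩ := n
  simp only [mink] at hw hn ⊢
  have hcs : (a * x + b * y) ^ 2 ≤ (c * z) ^ 2 := by
    nlinarith [sq_nonneg (a * y - b * x), mul_le_mul_of_nonneg_left hn (sq_nonneg c),
      sq_nonneg x, sq_nonneg y]
  have hcz : c * z ≤ 0 := mul_nonpos_of_nonpos_of_nonneg hw' hn'
  nlinarith [sq_le_sq.mp hcs, neg_abs_le (a * x + b * y), abs_of_nonpos hcz]

theorem mink_sub_mul_le_or_le {u v : ℝ × ℝ × ℝ} (hu : mink u u = 1)
    (ht : mink v v ≤ mink u v ^ 2) :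
    (∀ n, IsFutureNull n → mink u v * mink u n ≤ mink v n) ∨
      (∀ n, IsFutureNull n → mink v n ≤ mink u v * mink u n) := by
  set w := v - mink u v • u
  have hw : mink w w ≤ 0 := by
    rw [mink_sub_smul_self, hu]; linarith
  rcases le_total w.2.2 0 with hpast | hfuture
  · left
    intro n hn
    have := mink_nonneg_of_causal hw hpast hn.1.le hn.2.le
    rw [mink_sub_smul_left] at this
    linarith
  · right
    intro n hn
    have := mink_nonneg_of_causal (w := -w) (by rwa [mink_neg_left, mink_comm, mink_neg_left,
      neg_neg]) (by simpa using hfuture) hn.1.le hn.2.le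
    rw [mink_neg_left, mink_sub_smul_left] at this
    linarith

def arcMid (w : ℝ × ℝ × ℝ) : ℝ × ℝ × ℝ := (w.1, w.2.1, √(w.1 ^ 2 + w.2.1 ^ 2))

lemma isFutureNull_arcMid_and_mink_pos {w : ℝ × ℝ × ℝ} (hw : 0 < mink w w) :
    IsFutureNull (arcMid w) ∧ 0 < mink w (arcMid w) := by
  obtain ⟨a, b, c⟩ := w
  simp only [IsFutureNull, mink, arcMid] at hw ⊢
  have hρ : √(a ^ 2 + b ^ 2) ^ 2 = a ^ 2 + b ^ 2 := sq_sqrt (by positivity)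
  have hρc : c < √(a ^ 2 + b ^ 2) :=
    lt_of_pow_lt_pow_left₀ 2 (sqrt_nonneg _) (by nlinarith [sq_abs c, abs_nonneg c])
  refine ⟨⟨by linear_combination -hρ, by nlinarith [sqrt_nonneg (a ^ 2 + b ^ 2)]⟩, ?_⟩
  nlinarith [sqrt_nonneg (a ^ 2 + b ^ 2)]

/-- The endpoints of `I_u` are the future null vectors `(ac ∓ b, bc ± a, 1 + c²)` orthogonal to
`u = (a, b, c)`; the product of the values of `⟨v, ·⟩` there is `(1 + c²) (⟨u, v⟩² - ⟨v, v⟩)`. -/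
theorem mink_self_le_sq_mink_of_subset {u v : ℝ × ℝ × ℝ} (hu : mink u u = 1)
    (h : Iarc u ⊆ Iarc v) : mink v v ≤ mink u v ^ 2 := by
  obtain ⟨a, b, c⟩ := u
  obtain ⟨d, e, f⟩ := v
  simp only [mink] at hu
  have hend : ∀ s : ℝ, s ^ 2 = 1 →
      0 ≤ mink (d, e, f) (a * c - s * b, b * c + s * a, 1 + c ^ 2) := fun s hs =>
    Iarc_subset_Iarc_iff.mp h _
      ⟨by simp only [mink]; linear_combination (1 + c ^ 2) * hu + (a ^ 2 + b ^ 2) * hs,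
        by positivity⟩
      (le_of_eq (by simp only [mink]; linear_combination (-c) * hu))
  have hprod := mul_nonneg (hend 1 (one_pow 2)) (hend (-1) (by norm_num))
  have hid : mink (d, e, f) (a * c - 1 * b, b * c + 1 * a, 1 + c ^ 2) *
      mink (d, e, f) (a * c - -1 * b, b * c + -1 * a, 1 + c ^ 2) =
      (1 + c ^ 2) * (mink (a, b, c) (d, e, f) ^ 2 - mink (d, e, f) (d, e, f)) := by
    simp only [mink]; linear_combination (-(d ^ 2 + e ^ 2)) * hu
  rw [hid] at hprod
  nlinarith [sq_nonneg c]

theorem Iarc_subset_or_subset_of_one_le_mink {u v : ℝ × ℝ × ℝ} (hu : mink u u = 1)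
    (hv : mink v v = 1) (ht : 1 ≤ mink u v) : Iarc u ⊆ Iarc v ∨ Iarc v ⊆ Iarc u := by
  rcases mink_sub_mul_le_or_le (v := v) hu (by nlinarith) with hle | hge
  · exact .inl <| Iarc_subset_Iarc_iff.mpr fun n hn hun => by nlinarith [hle n hn]
  · exact .inr <| Iarc_subset_Iarc_iff.mpr fun n hn hvn => by nlinarith [hge n hn]

theorem one_le_mink_of_Iarc_subset {u v : ℝ × ℝ × ℝ} (hu : mink u u = 1) (hv : mink v v = 1)
    (h : Iarc u ⊆ Iarc v) : 1 ≤ mink u v := by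
  have hsub := Iarc_subset_Iarc_iff.mp h
  have ht := mink_self_le_sq_mink_of_subset hu h
  by_contra! ht1
  have htneg : mink u v ≤ -1 := by nlinarith
  rcases mink_sub_mul_le_or_le hu ht with hle | hge
  · have hv' : 0 < mink (-v) (-v) := by rw [mink_neg_left, mink_comm, mink_neg_left]; linarith
    obtain ⟨hn, hpos⟩ := isFutureNull_arcMid_and_mink_pos hv'
    rw [mink_neg_left] at hpos
    have := hle _ hn
    nlinarith [hsub _ hn (by nlinarith)]
  · obtain ⟨hn, hpos⟩ := isFutureNull_arcMid_and_mink_pos (w := u) (by linarith)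
    nlinarith [hsub _ hn hpos.le, hge _ hn]

/-- For two unit spacelike vectors `u, v` in `ℝ^{2,1}`, one has `⟨u,v⟩ ≥ 1` if and only if
`I_u ⊆ I_v` or `I_v ⊆ I_u`. -/
theorem stmt1 (u v : ℝ × ℝ × ℝ) (hu : mink u u = 1) (hv : mink v v = 1) :
    1 ≤ mink u v ↔ (Iarc u ⊆ Iarc v ∨ Iarc v ⊆ Iarc u) := by
  refine ⟨Iarc_subset_or_subset_of_one_le_mink hu hv, ?_⟩
  rintro (h | h)
  · exact one_le_mink_of_Iarc_subset hu hv h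
  · exact mink_comm u v ▸ one_le_mink_of_Iarc_subset hv hu h
end
end

section
/- Let γ: [-T, 0) → R^{2,1} be a unit-speed curve written as γ(t) = a(t)e₋ + b(t)e₀ + c(t)e₊ in a null frame (⟨e₊,e₋⟩ = -1/2, ⟨e₀,e₀⟩ = 1, e₀ ⊥ e₊, e₋, and e₊, e₋ future null), with a convex, positive, nonincreasing, a(t) → 0 as t → 0, c convex with c(t), c'(t) > 0 for t near 0, and -a'(t)c'(t) + b'(t)² = 1. Then the timelike distance sqrt(a(t)c(t)) from γ(t) to the line spanned by e₀ tends to 0 as t → 0; moreover |t| + a(t)c(t)/|t| is nonincreasing for t near 0. -/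
noncomputable section
open Real Set Filter

/-- Let `γ(t) = a(t)e₋ + b(t)e₀ + c(t)e₊` be a unit-speed curve on `[-T, 0)` in a null
frame of `ℝ^{2,1}`, with `a` convex, positive, nonincreasing and tending to `0` at `0⁻`,
`c` convex with `c, c' > 0` near `0`, and the unit-speed condition `-a'c' + (b')² = 1`.
Then the timelike distance `√(a(t)c(t))` from `γ(t)` to the spacelike line `ℝ·e₀` tends to
`0` as `t → 0⁻`; moreover `|t| + a(t)c(t)/|t|` is nonincreasing near `0`. -/
theorem stmt8 (T : ℝ) (hT : 0 < T) (a b c : ℝ → ℝ)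
    (hda : ∀ t ∈ Ico (-T) (0 : ℝ), DifferentiableAt ℝ a t)
    (hdb : ∀ t ∈ Ico (-T) (0 : ℝ), DifferentiableAt ℝ b t)
    (hdc : ∀ t ∈ Ico (-T) (0 : ℝ), DifferentiableAt ℝ c t)
    (haconv : ConvexOn ℝ (Ico (-T) 0) a)
    (hapos : ∀ t ∈ Ico (-T) (0 : ℝ), 0 < a t)
    (hamono : AntitoneOn a (Ico (-T) 0))
    (ha0 : Tendsto a (nhdsWithin 0 (Iio 0)) (nhds 0))
    (hcconv : ConvexOn ℝ (Ico (-T) 0) c)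
    (hcpos : ∃ t₀ ∈ Ico (-T) (0 : ℝ), ∀ t ∈ Ico t₀ (0 : ℝ), 0 < c t ∧ 0 < deriv c t)
    (hunit : ∀ t ∈ Ico (-T) (0 : ℝ), -(deriv a t) * deriv c t + (deriv b t) ^ 2 = 1) :
    Tendsto (fun t => Real.sqrt (a t * c t)) (nhdsWithin 0 (Iio 0)) (nhds 0) ∧
    ∃ t₁ ∈ Ico (-T) (0 : ℝ), AntitoneOn (fun t => |t| + a t * c t / |t|) (Ico t₁ 0) := by
  obtain ⟨t₀, ht₀, hc⟩ := hcpos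
  have ht₀T : -T ≤ t₀ := ht₀.1
  have ht₀0 : t₀ < 0 := ht₀.2
  -- key convexity inequality: a t ≤ t * deriv a t
  have key1 : ∀ t ∈ Ico (-T) (0 : ℝ), a t ≤ t * deriv a t := by
    intro t ht
    have htneg : t < 0 := ht.2
    have hslope : ∀ᶠ y in nhdsWithin (0 : ℝ) (Iio 0),
        deriv a t ≤ (a y - a t) / (y - t) := by
      filter_upwards [Ioo_mem_nhdsLT_of_mem (⟨htneg, le_refl (0:ℝ)⟩ : (0:ℝ) ∈ Ioc t 0)]
        with y hy
      have hyS : y ∈ Ico (-T) (0 : ℝ) := ⟨le_trans ht.1 hy.1.le, hy.2⟩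
      have := haconv.deriv_le_slope ht hyS hy.1 (hda t ht)
      rwa [slope_def_field] at this
    have hlim : Tendsto (fun y => (a y - a t) / (y - t)) (nhdsWithin (0 : ℝ) (Iio 0))
        (nhds ((0 - a t) / (0 - t))) := by
      have hid : Tendsto (fun y : ℝ => y) (nhdsWithin (0 : ℝ) (Iio 0)) (nhds 0) :=
        (continuous_id.tendsto 0).mono_left nhdsWithin_le_nhds
      exact (ha0.sub tendsto_const_nhds).div (hid.sub tendsto_const_nhds)
        (by linarith : (0:ℝ) - t ≠ 0)
    have h := ge_of_tendsto hlim hslope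
    rw [le_div_iff₀ (by linarith : (0:ℝ) < 0 - t)] at h
    nlinarith [h]
  -- a t * deriv c t ≤ -t on Ico t₀ 0
  have key3 : ∀ t ∈ Ico t₀ (0 : ℝ), a t * deriv c t ≤ -t := by
    intro t ht
    have htS : t ∈ Ico (-T) (0 : ℝ) := ⟨le_trans ht₀T ht.1, ht.2⟩
    have hu := hunit t htS
    have hcd : 0 < deriv c t := (hc t ht).2
    have h1 := key1 t htS
    have hb2 : (0:ℝ) ≤ (deriv b t) ^ 2 := sq_nonneg _
    -- -(a') c' ≤ 1
    have h2 : -(deriv a t) * deriv c t ≤ 1 := by linarith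
    have htneg : t < 0 := ht.2
    nlinarith [mul_le_mul_of_nonneg_right h1 hcd.le,
      mul_le_mul_of_nonneg_left h2 (by linarith : (0:ℝ) ≤ -t)]
  -- derivative of f is nonpositive on Ioo t₀ 0
  have hderiv : ∀ x ∈ Ioo t₀ (0 : ℝ),
      HasDerivAt (fun t => |t| + a t * c t / |t|)
        (-1 + ((deriv a x * c x + a x * deriv c x) * (-x) - a x * c x * (-1)) / (-x) ^ 2) x := by
    intro x hx
    have hxS : x ∈ Ico (-T) (0 : ℝ) := ⟨le_trans ht₀T hx.1.le, hx.2⟩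
    have hxneg : x < 0 := hx.2
    have hA := (hda x hxS).hasDerivAt
    have hC := (hdc x hxS).hasDerivAt
    have hneg : HasDerivAt (fun t : ℝ => -t) (-1) x := (hasDerivAt_id x).neg
    have hg : HasDerivAt (fun t => -t + a t * c t / (-t))
        (-1 + ((deriv a x * c x + a x * deriv c x) * (-x) - a x * c x * (-1)) / (-x) ^ 2) x :=
      hneg.add (((hA.mul hC).div hneg (by linarith : -x ≠ 0)))
    refine hg.congr_of_eventuallyEq ?_
    filter_upwards [Iio_mem_nhds hxneg] with y hy
    rw [abs_of_neg hy]
  have hderiv_nonpos : ∀ x ∈ Ioo t₀ (0 : ℝ),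
      deriv (fun t => |t| + a t * c t / |t|) x ≤ 0 := by
    intro x hx
    rw [(hderiv x hx).deriv]
    have hxS : x ∈ Ico (-T) (0 : ℝ) := ⟨le_trans ht₀T hx.1.le, hx.2⟩
    have hxneg : x < 0 := hx.2
    have hcx : 0 < c x := (hc x ⟨hx.1.le, hx.2⟩).1
    have h1 := key1 x hxS
    have h3 := key3 x ⟨hx.1.le, hx.2⟩
    have hx2 : (0:ℝ) < (-x) ^ 2 := by nlinarith
    have hN : (deriv a x * c x + a x * deriv c x) * (-x) - a x * c x * (-1) ≤ (-x) ^ 2 := by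
      nlinarith [mul_le_mul_of_nonneg_left h1 hcx.le,
        mul_le_mul_of_nonneg_left h3 (by linarith : (0:ℝ) ≤ -x)]
    have := (div_le_one hx2).mpr hN
    linarith
  -- continuity of f on Ico t₀ 0
  have hcont : ContinuousOn (fun t => |t| + a t * c t / |t|) (Ico t₀ 0) := by
    intro x hx
    have hxS : x ∈ Ico (-T) (0 : ℝ) := ⟨le_trans ht₀T hx.1, hx.2⟩
    have hxabs : |x| ≠ 0 := by
      simp [abs_eq_zero]; exact ne_of_lt hx.2
    exact (continuous_abs.continuousAt.add
      (((hda x hxS).continuousAt.mul (hdc x hxS).continuousAt).div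
        continuous_abs.continuousAt hxabs)).continuousWithinAt
  have hanti : AntitoneOn (fun t => |t| + a t * c t / |t|) (Ico t₀ 0) := by
    apply antitoneOn_of_deriv_nonpos (convex_Ico t₀ 0) hcont
    · intro x hx
      rw [interior_Ico] at hx
      exact (hderiv x hx).differentiableAt.differentiableWithinAt
    · intro x hx
      rw [interior_Ico] at hx
      exact hderiv_nonpos x hx
  refine ⟨?_, t₀, ht₀, hanti⟩
  -- now the limit: a t * c t ≤ M * (-t) with M = f t₀
  set M : ℝ := |t₀| + a t₀ * c t₀ / |t₀| with hM
  have hbound : ∀ t ∈ Ioo t₀ (0 : ℝ), a t * c t ≤ M * (-t) := by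
    intro t ht
    have htneg : t < 0 := ht.2
    have hle := hanti ⟨le_refl t₀, ht₀0⟩ ⟨ht.1.le, ht.2⟩ ht.1.le
    have habs : |t| = -t := abs_of_neg htneg
    have hpos : (0:ℝ) < -t := by linarith
    have h1 : a t * c t / (-t) ≤ M := by
      have : (0:ℝ) ≤ |t| := abs_nonneg t
      calc a t * c t / (-t) = a t * c t / |t| := by rw [habs]
        _ ≤ |t| + a t * c t / |t| := by linarith
        _ ≤ M := hle
    calc a t * c t = a t * c t / (-t) * (-t) := (div_mul_cancel₀ (a t * c t) (ne_of_gt hpos)).symm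
      _ ≤ M * (-t) := mul_le_mul_of_nonneg_right h1 hpos.le
  have hAC : Tendsto (fun t => a t * c t) (nhdsWithin (0:ℝ) (Iio 0)) (nhds 0) := by
    apply tendsto_of_tendsto_of_tendsto_of_le_of_le'
      (tendsto_const_nhds : Tendsto (fun _ : ℝ => (0:ℝ)) _ (nhds 0))
      (show Tendsto (fun t : ℝ => M * (-t)) (nhdsWithin (0:ℝ) (Iio 0)) (nhds 0) by
        have hid : Tendsto (fun t : ℝ => -t) (nhdsWithin (0:ℝ) (Iio 0)) (nhds 0) := by
          have := (continuous_neg.tendsto (0:ℝ)).mono_left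
            (nhdsWithin_le_nhds : nhdsWithin (0:ℝ) (Iio 0) ≤ nhds 0)
          simpa using this
        simpa using hid.const_mul M)
    · filter_upwards [Ioo_mem_nhdsLT_of_mem (⟨ht₀0, le_refl (0:ℝ)⟩ : (0:ℝ) ∈ Ioc t₀ 0)]
        with t ht
      have htS : t ∈ Ico (-T) (0 : ℝ) := ⟨le_trans ht₀T ht.1.le, ht.2⟩
      exact (mul_pos (hapos t htS) (hc t ⟨ht.1.le, ht.2⟩).1).le
    · filter_upwards [Ioo_mem_nhdsLT_of_mem (⟨ht₀0, le_refl (0:ℝ)⟩ : (0:ℝ) ∈ Ioc t₀ 0)]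
        with t ht
      exact hbound t ht
  have := hAC.sqrt
  simpa using this
end
end

section
/- For λ ∈ R, let X^λ(t,s) = ( √(1+λ²)(t - coth t) + λs, √(1+λ²) sinh(s)/sinh(t), √(1+λ²) cosh(s)/sinh(t) ) for t > 0, s ∈ R. The pullback by X^λ of the Minkowski metric has coefficients E = (1+λ²)coth²t, F = λ√(1+λ²)coth²t, G = λ²coth²t + 1/sinh²t, and EG - F² = (1+λ²) coth²(t)/sinh²(t) > 0; hence X^λ is a spacelike immersion. -/
noncomputable section
open Real Set

/-- The glide-invariant surface parametrization `X^λ`. -/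
def Xlam (l : ℝ) (t s : ℝ) : ℝ × ℝ × ℝ :=
  (Real.sqrt (1 + l ^ 2) * (t - Real.cosh t / Real.sinh t) + l * s,
   Real.sqrt (1 + l ^ 2) * Real.sinh s / Real.sinh t,
   Real.sqrt (1 + l ^ 2) * Real.cosh s / Real.sinh t)

/-! The last two components of `∂_t X^λ` and `∂_s X^λ` are multiples of `(sinh s, cosh s)` and
`(cosh s, sinh s)`, which have Minkowski norms `-1` and `1` and are Minkowski-orthogonal. Hence `s`
drops out of `E`, `F`, `G`, and each of them reduces to the identity
`coth² t - 1 / sinh² t = 1`. -/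

lemma sq_sqrt_one_add_sq (l : ℝ) : √(1 + l ^ 2) ^ 2 = 1 + l ^ 2 := sq_sqrt (by positivity)

lemma cosh_div_sinh_sq_sub_one_div_sinh_sq {t : ℝ} (ht : t ≠ 0) :
    (cosh t / sinh t) ^ 2 - 1 / sinh t ^ 2 = 1 := by
  rw [div_pow, ← sub_div, cosh_sq, add_sub_cancel_right,
    div_self (pow_ne_zero 2 (sinh_ne_zero.mpr ht))]

lemma hasDerivAt_sub_cosh_div_sinh {t : ℝ} (ht : t ≠ 0) :
    HasDerivAt (fun t' => t' - cosh t' / sinh t') ((cosh t / sinh t) ^ 2) t := by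
  have hsinh : sinh t ≠ 0 := sinh_ne_zero.mpr ht
  refine ((hasDerivAt_id t).sub ((hasDerivAt_cosh t).div (hasDerivAt_sinh t) hsinh)).congr_deriv ?_
  field_simp
  ring

def XlamDt (l t s : ℝ) : ℝ × ℝ × ℝ :=
  (√(1 + l ^ 2) * (cosh t / sinh t) ^ 2,
   -(√(1 + l ^ 2) * cosh t / sinh t ^ 2) * sinh s,
   -(√(1 + l ^ 2) * cosh t / sinh t ^ 2) * cosh s)

def XlamDs (l t s : ℝ) : ℝ × ℝ × ℝ :=
  (l, √(1 + l ^ 2) / sinh t * cosh s, √(1 + l ^ 2) / sinh t * sinh s)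

lemma hasDerivAt_Xlam_t (l s : ℝ) {t : ℝ} (ht : t ≠ 0) :
    HasDerivAt (fun t' => Xlam l t' s) (XlamDt l t s) t := by
  have hsinh : sinh t ≠ 0 := sinh_ne_zero.mpr ht
  refine (((hasDerivAt_sub_cosh_div_sinh ht).const_mul _).add_const _).prodMk
    (HasDerivAt.prodMk ?_ ?_)
  · exact ((hasDerivAt_const t _).div (hasDerivAt_sinh t) hsinh).congr_deriv (by ring)
  · exact ((hasDerivAt_const t _).div (hasDerivAt_sinh t) hsinh).congr_deriv (by ring)

lemma hasDerivAt_Xlam_s (l t s : ℝ) :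
    HasDerivAt (fun s' => Xlam l t s') (XlamDs l t s) s := by
  have hfst : HasDerivAt (fun s' => √(1 + l ^ 2) * (t - cosh t / sinh t) + l * s') l s := by
    simpa using ((hasDerivAt_id s).const_mul l).const_add (√(1 + l ^ 2) * (t - cosh t / sinh t))
  refine hfst.prodMk (HasDerivAt.prodMk ?_ ?_)
  · exact (((hasDerivAt_sinh s).const_mul _).div_const _).congr_deriv (by ring)
  · exact (((hasDerivAt_cosh s).const_mul _).div_const _).congr_deriv (by ring)

lemma mink_XlamDt_XlamDt (l s : ℝ) {t : ℝ} (ht : t ≠ 0) :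
    mink (XlamDt l t s) (XlamDt l t s) = (1 + l ^ 2) * (cosh t / sinh t) ^ 2 := by
  unfold mink XlamDt
  linear_combination (-(√(1 + l ^ 2) * cosh t / sinh t ^ 2) ^ 2) * cosh_sq s +
    √(1 + l ^ 2) ^ 2 * (cosh t / sinh t) ^ 2 * cosh_div_sinh_sq_sub_one_div_sinh_sq ht +
    (cosh t / sinh t) ^ 2 * sq_sqrt_one_add_sq l

lemma mink_XlamDt_XlamDs (l t s : ℝ) :
    mink (XlamDt l t s) (XlamDs l t s) = l * √(1 + l ^ 2) * (cosh t / sinh t) ^ 2 := by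
  unfold mink XlamDt XlamDs
  ring

lemma mink_XlamDs_XlamDs (l s : ℝ) {t : ℝ} (ht : t ≠ 0) :
    mink (XlamDs l t s) (XlamDs l t s) = l ^ 2 * (cosh t / sinh t) ^ 2 + 1 / sinh t ^ 2 := by
  unfold mink XlamDs
  linear_combination (√(1 + l ^ 2) / sinh t) ^ 2 * cosh_sq s +
    1 / sinh t ^ 2 * sq_sqrt_one_add_sq l - l ^ 2 * cosh_div_sinh_sq_sub_one_div_sinh_sq ht

/-- The coefficients of the first fundamental form of `X^λ` are
`E = (1+λ²)coth²t`, `F = λ√(1+λ²)coth²t`, `G = λ²coth²t + 1/sinh²t`, with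
`EG - F² = (1+λ²)coth²t/sinh²t > 0`; hence `X^λ` is a spacelike immersion. -/
theorem stmt13 (l t s : ℝ) (ht : 0 < t) :
    let Xt := deriv (fun t' => Xlam l t' s) t
    let Xs := deriv (fun s' => Xlam l t s') s
    mink Xt Xt = (1 + l ^ 2) * (Real.cosh t / Real.sinh t) ^ 2 ∧
    mink Xt Xs = l * Real.sqrt (1 + l ^ 2) * (Real.cosh t / Real.sinh t) ^ 2 ∧
    mink Xs Xs = l ^ 2 * (Real.cosh t / Real.sinh t) ^ 2 + 1 / (Real.sinh t) ^ 2 ∧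
    mink Xt Xt * mink Xs Xs - (mink Xt Xs) ^ 2 =
      (1 + l ^ 2) * (Real.cosh t / Real.sinh t) ^ 2 / (Real.sinh t) ^ 2 ∧
    0 < mink Xt Xt ∧
    0 < mink Xt Xt * mink Xs Xs - (mink Xt Xs) ^ 2 := by
  intro Xt Xs
  rw [show Xt = XlamDt l t s from (hasDerivAt_Xlam_t l s ht.ne').deriv,
    show Xs = XlamDs l t s from (hasDerivAt_Xlam_s l t s).deriv, mink_XlamDt_XlamDt l s ht.ne',
    mink_XlamDt_XlamDs, mink_XlamDs_XlamDs l s ht.ne']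
  have hEGF : (1 + l ^ 2) * (cosh t / sinh t) ^ 2 *
        (l ^ 2 * (cosh t / sinh t) ^ 2 + 1 / sinh t ^ 2) -
        (l * √(1 + l ^ 2) * (cosh t / sinh t) ^ 2) ^ 2 =
      (1 + l ^ 2) * (cosh t / sinh t) ^ 2 / sinh t ^ 2 := by
    linear_combination -(l * (cosh t / sinh t) ^ 2) ^ 2 * sq_sqrt_one_add_sq l
  exact ⟨rfl, rfl, rfl, hEGF, by positivity, hEGF ▸ by positivity⟩
end
end

section
/- Let Σ ⊂ R^{2,1} be a surface invariant under the one-parameter group A^λ_s(x₁,x₂,x₃) = (x₁ + λs, cosh(s)x₂ + sinh(s)x₃, sinh(s)x₂ + cosh(s)x₃), and let φ_λ(x) = sup_{p∈Σ} ⟨p, ξ(x,0)⟩ where ξ(x,y) = (2x, -1+x²+y², 1+x²+y²). Then for every s, x ∈ R: φ_λ(e^s x) = e^s (φ_λ(x) + 2λ s x). -/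
noncomputable section
open Real Set

/-- The glide-hyperbolic one-parameter group `A^λ_s`. -/
def Aglide (l s : ℝ) (p : ℝ × ℝ × ℝ) : ℝ × ℝ × ℝ :=
  (p.1 + l * s,
   Real.cosh s * p.2.1 + Real.sinh s * p.2.2,
   Real.sinh s * p.2.1 + Real.cosh s * p.2.2)

/-- The parametrization `ξ(x,y) = (2x, -1+x²+y², 1+x²+y²)` (point at infinity `π/2`). -/
def xiMap (x y : ℝ) : ℝ × ℝ × ℝ := (2 * x, -1 + x ^ 2 + y ^ 2, 1 + x ^ 2 + y ^ 2)

namespace EReal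

def addCoeOrderIso (c : ℝ) : EReal ≃o EReal :=
  StrictMono.orderIsoOfSurjective (· + (c : EReal)) (fun _ _ h => add_lt_add_right_coe h c)
    fun t => ⟨t - c, sub_add_cancel⟩

theorem strictMono_coe_mul {a : ℝ} (ha : 0 < a) : StrictMono ((a : EReal) * ·) := by
  have ha' : (a : EReal) ≠ 0 := by exact_mod_cast ha.ne'
  refine (monotone_mul_left_of_nonneg (by exact_mod_cast ha.le)).strictMono_of_injective ?_
  intro u v huv
  simpa only [mul_comm (a : EReal), ← mul_div_right,
    div_mul_cancel (coe_ne_bot a) (coe_ne_top a) ha'] using congrArg (· / (a : EReal)) huv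

def coeMulOrderIso {a : ℝ} (ha : 0 < a) : EReal ≃o EReal :=
  StrictMono.orderIsoOfSurjective ((a : EReal) * ·) (strictMono_coe_mul ha)
    fun t => ⟨t / a, mul_div_cancel (coe_ne_bot a) (coe_ne_top a) (by exact_mod_cast ha.ne')⟩

theorem biSup_coe_mul_add_coe {ι : Type*} (S : Set ι) (f : ι → EReal) {a : ℝ} (ha : 0 < a)
    (c : ℝ) : ⨆ i ∈ S, (a : EReal) * (f i + c) = (a : EReal) * ((⨆ i ∈ S, f i) + c) :=
  ((addCoeOrderIso c).trans (coeMulOrderIso ha)).map_iSup₂ _ |>.symm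

end EReal

/-- Writing `A_s = L_s + τ_s`, the boost `L_s` is a Lorentz isometry with
`L_{-s} ξ(eˢx, 0) = eˢ ξ(x, 0)`, and `⟨ξ(eˢx, 0), τ_s⟩ = 2λs eˢx`. -/
theorem mink_aglide_xiMap (l s x : ℝ) (p : ℝ × ℝ × ℝ) :
    mink (Aglide l s p) (xiMap (Real.exp s * x) 0) =
      Real.exp s * (mink p (xiMap x 0) + 2 * l * s * x) := by
  simp only [mink, Aglide, xiMap, Real.cosh_eq, Real.sinh_eq, Real.exp_neg]
  field_simp [Real.exp_ne_zero s]
  ring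

/-- If `Σ ⊂ ℝ^{2,1}` is invariant under the glide-hyperbolic group `A^λ`, then its
parabolic null support function `φ_λ(x) = sup_{p∈Σ}⟨p, ξ(x,0)⟩` satisfies the functional
equation `φ_λ(e^s x) = e^s (φ_λ(x) + 2λsx)` for all `s, x ∈ ℝ`. -/
theorem stmt15 (l : ℝ) (S : Set (ℝ × ℝ × ℝ)) (hinv : ∀ s : ℝ, Aglide l s '' S = S) :
    ∀ s x : ℝ,
      (⨆ p ∈ S, ((mink p (xiMap (Real.exp s * x) 0) : ℝ) : EReal)) =
        ((Real.exp s : ℝ) : EReal) *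
          ((⨆ p ∈ S, ((mink p (xiMap x 0) : ℝ) : EReal)) + ((2 * l * s * x : ℝ) : EReal)) := by
  intro s x
  calc (⨆ p ∈ S, ((mink p (xiMap (Real.exp s * x) 0) : ℝ) : EReal))
      = ⨆ p ∈ Aglide l s '' S, ((mink p (xiMap (Real.exp s * x) 0) : ℝ) : EReal) := by
        rw [hinv s]
    _ = ⨆ p ∈ S, ((mink (Aglide l s p) (xiMap (Real.exp s * x) 0) : ℝ) : EReal) := iSup_image
    _ = ⨆ p ∈ S, ((Real.exp s * (mink p (xiMap x 0) + 2 * l * s * x) : ℝ) : EReal) := by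
        simp only [mink_aglide_xiMap]
    _ = _ := by
        push_cast
        exact EReal.biSup_coe_mul_add_coe S _ (Real.exp_pos s) _
end
end
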